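/- arXiv:1109.1075 — 2 statements merged into one kernel-verified Lean document; each statement's English description precedes it below -/
import Mathlib

section
/- Assume the Heston coefficients additionally satisfy b₁ = 0. Then for every γ > 0 there exists a constant C₅ > 0, depending only on σ, ρ, κ, θ, r, q and γ, such that for every open set O ⊆ ℍ and all u, v ∈ C^∞(ℝ²) with compact support: |a(u,v)| ≤ C₅ ‖u‖_{H¹(O,𝔴)} ‖v‖_{H¹(O,𝔴)}. -/
open MeasureTheory Real Filter

noncomputable section

/-- The open upper half-plane ℍ ⊂ ℝ². -/
def UHP : Set (ℝ × ℝ) := {p : ℝ × ℝ | 0 < p.2}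

/-- Partial derivative in the first (x) variable. -/
def pdX (u : ℝ × ℝ → ℝ) (p : ℝ × ℝ) : ℝ := fderiv ℝ u p (1, 0)

/-- Partial derivative in the second (y) variable. -/
def pdY (u : ℝ × ℝ → ℝ) (p : ℝ × ℝ) : ℝ := fderiv ℝ u p (0, 1)

/-- The weight 𝔴(x,y) = y^(β−1) exp(−γ|x| − μ y). -/
def hw (β γ μ : ℝ) (p : ℝ × ℝ) : ℝ :=
  p.2 ^ (β - 1) * Real.exp (-γ * |p.1| - μ * p.2)

/-- The Heston operator A. -/
def hestonOp (σ ρ κ θ r q : ℝ) (u : ℝ × ℝ → ℝ) (p : ℝ × ℝ) : ℝ :=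
  -(p.2 / 2) * (pdX (pdX u) p + 2 * ρ * σ * pdY (pdX u) p + σ ^ 2 * pdY (pdY u) p)
    - (r - q - p.2 / 2) * pdX u p - κ * (θ - p.2) * pdY u p + r * u p

/-- The Heston bilinear form a(u,v) over a set O ⊆ ℍ (with β = 2κθ/σ², μ = 2κ/σ²,
a₁ = κρ/σ − 1/2, b₁ = r − q − κθρ/σ). -/
def hestonForm (σ ρ κ θ r q γ : ℝ) (O : Set (ℝ × ℝ)) (u v : ℝ × ℝ → ℝ) : ℝ :=
  1 / 2 * (∫ p in O,
      (pdX u p * pdX v p + ρ * σ * pdY u p * pdX v p + ρ * σ * pdX u p * pdY v p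
          + σ ^ 2 * pdY u p * pdY v p) * p.2 * hw (2 * κ * θ / σ ^ 2) γ (2 * κ / σ ^ 2) p)
    - γ / 2 * (∫ p in O,
      (pdX u p + ρ * σ * pdY u p) * v p * Real.sign p.1 * p.2
          * hw (2 * κ * θ / σ ^ 2) γ (2 * κ / σ ^ 2) p)
    - (∫ p in O,
      ((κ * ρ / σ - 1 / 2) * p.2 + (r - q - κ * θ * ρ / σ)) * pdX u p * v p
          * hw (2 * κ * θ / σ ^ 2) γ (2 * κ / σ ^ 2) p)
    + r * (∫ p in O, u p * v p * hw (2 * κ * θ / σ ^ 2) γ (2 * κ / σ ^ 2) p)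

/-- The squared weighted Sobolev H¹(O,𝔴) norm:
‖u‖² = ∫_O ( y(u_x² + u_y²) + (1+y)u² ) 𝔴. -/
def h1Sq (β γ μ : ℝ) (O : Set (ℝ × ℝ)) (u : ℝ × ℝ → ℝ) : ℝ :=
  ∫ p in O, (p.2 * ((pdX u p) ^ 2 + (pdY u p) ^ 2) + (1 + p.2) * (u p) ^ 2) * hw β γ μ p

/-!
Pointwise on `ℍ`, each of the four integrands of the Heston form is bounded by a constant times
`√(h1Density u) * √(h1Density v)`: the second-order and `sign` terms carry the factor `y 𝔴` and
pair first-order quantities of `u` and `v`, the drift term is `a₁ y u_x v 𝔴` and the zeroth-order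
term is `u v 𝔴`. Integrating and applying the Cauchy–Schwarz inequality gives the estimate. The
hypothesis `b₁ = 0` removes the term `b₁ u_x v 𝔴`, which has no factor `y` and is not controlled
by the weighted `H¹` norm. The densities are integrable on `O ⊆ ℍ` because `u`, `v` have compact
support and `y ^ (β - 1)` is integrable near `y = 0` for `β > 0`.
-/

theorem abs_add_four (a b c d : ℝ) : |a + b + c + d| ≤ |a| + |b| + |c| + |d| :=
  (abs_add_le _ _).trans (add_le_add_left (abs_add_three a b c) _)

theorem abs_mul_le_abs_mul_of_abs_le {c x S : ℝ} (h : |x| ≤ S) : |c * x| ≤ |c| * S := by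
  rw [abs_mul]
  exact mul_le_mul_of_nonneg_left h (abs_nonneg c)

theorem abs_mul_mul_le_sqrt_mul_sqrt {a b s A B : ℝ} (hs : 0 ≤ s) (ha : a ^ 2 * s ≤ A)
    (hb : b ^ 2 * s ≤ B) : |a * b * s| ≤ √A * √B :=
  calc |a * b * s| = √(a ^ 2 * s) * √(b ^ 2 * s) := by
        rw [← Real.sqrt_mul (by positivity), show a ^ 2 * s * (b ^ 2 * s) = (a * b * s) ^ 2 by ring,
          Real.sqrt_sq_eq_abs]
    _ ≤ √A * √B := by gcongr

theorem Real.abs_sign_le_one (x : ℝ) : |Real.sign x| ≤ 1 := by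
  rcases Real.sign_apply_eq x with h | h | h <;> simp [h]

section CauchySchwarz

variable {α : Type*} [MeasurableSpace α] {μ : Measure α} {f g : α → ℝ}

theorem memLp_two_sqrt (hf : Integrable f μ) (hf0 : 0 ≤ᵐ[μ] f) : MemLp (fun x ↦ √(f x)) 2 μ :=
  (memLp_two_iff_integrable_sq (Real.continuous_sqrt.comp_aestronglyMeasurable hf.1)).2 <|
    hf.congr <| by filter_upwards [hf0] with x hx using (Real.sq_sqrt hx).symm

theorem integral_sqrt_mul_sqrt_le (hf : Integrable f μ) (hg : Integrable g μ)
    (hf0 : 0 ≤ᵐ[μ] f) (hg0 : 0 ≤ᵐ[μ] g) :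
    ∫ x, √(f x) * √(g x) ∂μ ≤ √(∫ x, f x ∂μ) * √(∫ x, g x ∂μ) := by
  have hsq {h : α → ℝ} (h0 : 0 ≤ᵐ[μ] h) : ∫ x, √(h x) ^ (2 : ℝ) ∂μ = ∫ x, h x ∂μ :=
    integral_congr_ae <| by
      filter_upwards [h0] with x hx using by rw [Real.rpow_two, Real.sq_sqrt hx]
  have := integral_mul_le_Lp_mul_Lq_of_nonneg Real.HolderConjugate.two_two
    (Eventually.of_forall fun x ↦ Real.sqrt_nonneg (f x))
    (Eventually.of_forall fun x ↦ Real.sqrt_nonneg (g x))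
    (by simpa using memLp_two_sqrt hf hf0) (by simpa using memLp_two_sqrt hg hg0)
  rwa [hsq hf0, hsq hg0, ← Real.sqrt_eq_rpow, ← Real.sqrt_eq_rpow] at this

theorem abs_integral_le_mul_sqrt_mul_sqrt {F G : α → ℝ} {c : ℝ} (hc : 0 ≤ c)
    (hF : Integrable F μ) (hG : Integrable G μ) (hF0 : 0 ≤ᵐ[μ] F) (hG0 : 0 ≤ᵐ[μ] G)
    (hf : ∀ᵐ x ∂μ, |f x| ≤ c * (√(F x) * √(G x))) :
    |∫ x, f x ∂μ| ≤ c * √(∫ x, F x ∂μ) * √(∫ x, G x ∂μ) := by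
  have hFG : Integrable (fun x ↦ √(F x) * √(G x)) μ :=
    (memLp_two_sqrt hF hF0).integrable_mul (memLp_two_sqrt hG hG0)
  calc |∫ x, f x ∂μ| ≤ ∫ x, |f x| ∂μ := abs_integral_le_integral_abs
    _ ≤ ∫ x, c * (√(F x) * √(G x)) ∂μ :=
        integral_mono_of_nonneg (Eventually.of_forall fun x ↦ abs_nonneg (f x))
          (hFG.const_mul c) hf
    _ = c * ∫ x, √(F x) * √(G x) ∂μ := integral_const_mul c _
    _ ≤ c * (√(∫ x, F x ∂μ) * √(∫ x, G x ∂μ)) := by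
        gcongr; exact integral_sqrt_mul_sqrt_le hF hG hF0 hG0
    _ = c * √(∫ x, F x ∂μ) * √(∫ x, G x ∂μ) := (mul_assoc _ _ _).symm

end CauchySchwarz

section PartialDerivatives

variable {u : ℝ × ℝ → ℝ} {p : ℝ × ℝ}

theorem continuous_pdX (hu : ContDiff ℝ 1 u) : Continuous (pdX u) :=
  (hu.continuous_fderiv one_ne_zero).clm_apply continuous_const

theorem continuous_pdY (hu : ContDiff ℝ 1 u) : Continuous (pdY u) :=
  (hu.continuous_fderiv one_ne_zero).clm_apply continuous_const

theorem pdX_eq_zero_of_notMem_tsupport (hp : p ∉ tsupport u) : pdX u p = 0 :=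
  image_eq_zero_of_notMem_tsupport fun h ↦ hp (tsupport_fderiv_apply_subset ℝ (1, 0) h)

theorem pdY_eq_zero_of_notMem_tsupport (hp : p ∉ tsupport u) : pdY u p = 0 :=
  image_eq_zero_of_notMem_tsupport fun h ↦ hp (tsupport_fderiv_apply_subset ℝ (0, 1) h)

end PartialDerivatives

section Weight

variable {β γ μ : ℝ}

theorem measurable_hw : Measurable (hw β γ μ) := by
  unfold hw
  fun_prop

theorem hw_nonneg {p : ℝ × ℝ} (hp : 0 ≤ p.2) : 0 ≤ hw β γ μ p :=
  mul_nonneg (Real.rpow_nonneg hp _) (Real.exp_nonneg _)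

theorem hw_le_rpow {p : ℝ × ℝ} (hγ : 0 ≤ γ) (hμ : 0 ≤ μ) (hp : 0 ≤ p.2) :
    hw β γ μ p ≤ p.2 ^ (β - 1) := by
  refine mul_le_of_le_one_right (Real.rpow_nonneg hp _) (Real.exp_le_one_iff.2 ?_)
  nlinarith [abs_nonneg p.1]

theorem integrableOn_hw_of_isCompact (hβ : 0 < β) (hγ : 0 ≤ γ) (hμ : 0 ≤ μ)
    {K : Set (ℝ × ℝ)} (hK : IsCompact K) : IntegrableOn (hw β γ μ) (K ∩ UHP) := by
  obtain ⟨R, hR⟩ := hK.isBounded.subset_closedBall 0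
  have hbox : IntegrableOn (fun p : ℝ × ℝ ↦ p.2 ^ (β - 1)) (Set.Icc (-R) R ×ˢ Set.Ioc 0 R) := by
    have h := (integrableOn_const (s := Set.Icc (-R) R) (C := (1 : ℝ))
      (measure_Icc_lt_top (μ := volume)).ne).mul_prod
      (intervalIntegral.intervalIntegrable_rpow' (r := β - 1) (by linarith) (a := 0) (b := R)).1
    rw [Measure.prod_restrict, ← Measure.volume_eq_prod] at h
    simpa [IntegrableOn] using h
  have hsub : K ∩ UHP ⊆ Set.Icc (-R) R ×ˢ Set.Ioc 0 R := fun p ⟨hpK, hpU⟩ ↦ by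
    have hp : ‖p‖ ≤ R := mem_closedBall_zero_iff.1 (hR hpK)
    exact ⟨abs_le.1 ((norm_fst_le p).trans hp), hpU,
      (le_abs_self _).trans ((norm_snd_le p).trans hp)⟩
  refine IntegrableOn.mono_set (Integrable.mono' hbox measurable_hw.aestronglyMeasurable ?_) hsub
  refine ae_restrict_of_forall_mem (measurableSet_Icc.prod measurableSet_Ioc) fun p hp ↦ ?_
  rw [Real.norm_of_nonneg (hw_nonneg hp.2.1.le)]
  exact hw_le_rpow hγ hμ hp.2.1.le

theorem integrableOn_mul_hw (hβ : 0 < β) (hγ : 0 ≤ γ) (hμ : 0 ≤ μ)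
    {G : ℝ × ℝ → ℝ} (hG : Continuous G) (hGc : HasCompactSupport G)
    {O : Set (ℝ × ℝ)} (hO : MeasurableSet O) (hOU : O ⊆ UHP) :
    IntegrableOn (fun p ↦ G p * hw β γ μ p) O := by
  obtain ⟨C, hC⟩ := hGc.exists_bound_of_continuous hG
  have hK : IntegrableOn (fun p ↦ G p * hw β γ μ p) (tsupport G ∩ UHP) :=
    (integrableOn_hw_of_isCompact hβ hγ hμ hGc.isCompact).bdd_mul
      hG.aestronglyMeasurable (.of_forall hC)
  refine hK.of_forall_sdiff_eq_zero hO fun p hp ↦ ?_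
  rw [image_eq_zero_of_notMem_tsupport fun h ↦ hp.2 ⟨h, hOU hp.1⟩, zero_mul]

end Weight

def h1Density (β γ μ : ℝ) (u : ℝ × ℝ → ℝ) (p : ℝ × ℝ) : ℝ :=
  (p.2 * (pdX u p ^ 2 + pdY u p ^ 2) + (1 + p.2) * u p ^ 2) * hw β γ μ p

theorem sq_mul_le_h1Density (β γ μ : ℝ) (u : ℝ × ℝ → ℝ) {p : ℝ × ℝ} (hp : 0 < p.2) :
    pdX u p ^ 2 * (p.2 * hw β γ μ p) ≤ h1Density β γ μ u p ∧
    pdY u p ^ 2 * (p.2 * hw β γ μ p) ≤ h1Density β γ μ u p ∧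
    u p ^ 2 * (p.2 * hw β γ μ p) ≤ h1Density β γ μ u p ∧
    u p ^ 2 * hw β γ μ p ≤ h1Density β γ μ u p := by
  have hw0 := hw_nonneg (β := β) (γ := γ) (μ := μ) hp.le
  have hX := mul_nonneg (mul_nonneg hp.le (sq_nonneg (pdX u p))) hw0
  have hY := mul_nonneg (mul_nonneg hp.le (sq_nonneg (pdY u p))) hw0
  have hU := mul_nonneg (mul_nonneg hp.le (sq_nonneg (u p))) hw0
  have hU' := mul_nonneg (sq_nonneg (u p)) hw0
  unfold h1Density
  refine ⟨?_, ?_, ?_, ?_⟩ <;> nlinarith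

section Density

variable {β γ μ : ℝ} {u : ℝ × ℝ → ℝ} {p : ℝ × ℝ}

theorem integrableOn_h1Density (hβ : 0 < β) (hγ : 0 ≤ γ) (hμ : 0 ≤ μ)
    (hu : ContDiff ℝ 1 u) (hcu : HasCompactSupport u) {O : Set (ℝ × ℝ)} (hO : MeasurableSet O)
    (hOU : O ⊆ UHP) : IntegrableOn (h1Density β γ μ u) O := by
  have := continuous_pdX hu
  have := continuous_pdY hu
  have := hu.continuous
  refine integrableOn_mul_hw hβ hγ hμ (by fun_prop)
    (HasCompactSupport.intro hcu fun p hp ↦ ?_) hO hOU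
  simp [pdX_eq_zero_of_notMem_tsupport hp, pdY_eq_zero_of_notMem_tsupport hp,
    image_eq_zero_of_notMem_tsupport hp]

theorem h1Density_nonneg (hp : 0 < p.2) : 0 ≤ h1Density β γ μ u p := by
  have := hw_nonneg (β := β) (γ := γ) (μ := μ) hp.le
  unfold h1Density
  positivity

end Density

section Terms

variable {β γ μ : ℝ} {u v : ℝ × ℝ → ℝ} {p : ℝ × ℝ}

theorem abs_gradient_term_le (hp : 0 < p.2) (c d : ℝ) :
    |(pdX u p * pdX v p + c * pdY u p * pdX v p + c * pdX u p * pdY v p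
        + d * pdY u p * pdY v p) * p.2 * hw β γ μ p|
      ≤ (1 + 2 * |c| + |d|) * (√(h1Density β γ μ u p) * √(h1Density β γ μ v p)) := by
  obtain ⟨hXu, hYu, -, -⟩ := sq_mul_le_h1Density β γ μ u hp
  obtain ⟨hXv, hYv, -, -⟩ := sq_mul_le_h1Density β γ μ v hp
  have hs : 0 ≤ p.2 * hw β γ μ p := mul_nonneg hp.le (hw_nonneg hp.le)
  set s := p.2 * hw β γ μ p with hs_def
  set S := √(h1Density β γ μ u p) * √(h1Density β γ μ v p)
  calc _ = |pdX u p * pdX v p * s + c * (pdY u p * pdX v p * s) + c * (pdX u p * pdY v p * s)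
          + d * (pdY u p * pdY v p * s)| := by rw [hs_def]; ring_nf
    _ ≤ _ := abs_add_four _ _ _ _
    _ ≤ S + |c| * S + |c| * S + |d| * S := by
        gcongr ?_ + ?_ + ?_ + ?_
        exacts [abs_mul_mul_le_sqrt_mul_sqrt hs hXu hXv,
          abs_mul_le_abs_mul_of_abs_le (abs_mul_mul_le_sqrt_mul_sqrt hs hYu hXv),
          abs_mul_le_abs_mul_of_abs_le (abs_mul_mul_le_sqrt_mul_sqrt hs hXu hYv),
          abs_mul_le_abs_mul_of_abs_le (abs_mul_mul_le_sqrt_mul_sqrt hs hYu hYv)]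
    _ = _ := by ring

theorem abs_sign_term_le (hp : 0 < p.2) (c : ℝ) :
    |(pdX u p + c * pdY u p) * v p * Real.sign p.1 * p.2 * hw β γ μ p|
      ≤ (1 + |c|) * (√(h1Density β γ μ u p) * √(h1Density β γ μ v p)) := by
  obtain ⟨hXu, hYu, -, -⟩ := sq_mul_le_h1Density β γ μ u hp
  obtain ⟨-, -, hUv, -⟩ := sq_mul_le_h1Density β γ μ v hp
  have hs : 0 ≤ p.2 * hw β γ μ p := mul_nonneg hp.le (hw_nonneg hp.le)
  set s := p.2 * hw β γ μ p with hs_def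
  set S := √(h1Density β γ μ u p) * √(h1Density β γ μ v p)
  calc _ = |(pdX u p * v p * s + c * (pdY u p * v p * s)) * Real.sign p.1| := by
          rw [hs_def]; ring_nf
    _ ≤ |pdX u p * v p * s + c * (pdY u p * v p * s)| := by
        rw [abs_mul]; exact mul_le_of_le_one_right (abs_nonneg _) (Real.abs_sign_le_one _)
    _ ≤ _ := abs_add_le _ _
    _ ≤ S + |c| * S := add_le_add (abs_mul_mul_le_sqrt_mul_sqrt hs hXu hUv)
        (abs_mul_le_abs_mul_of_abs_le (abs_mul_mul_le_sqrt_mul_sqrt hs hYu hUv))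
    _ = _ := by ring

theorem abs_drift_term_le (hp : 0 < p.2) (a : ℝ) :
    |a * p.2 * pdX u p * v p * hw β γ μ p|
      ≤ |a| * (√(h1Density β γ μ u p) * √(h1Density β γ μ v p)) := by
  obtain ⟨hXu, -, -, -⟩ := sq_mul_le_h1Density β γ μ u hp
  obtain ⟨-, -, hUv, -⟩ := sq_mul_le_h1Density β γ μ v hp
  have hs : 0 ≤ p.2 * hw β γ μ p := mul_nonneg hp.le (hw_nonneg hp.le)
  calc _ = |a * (pdX u p * v p * (p.2 * hw β γ μ p))| := by ring_nf
    _ ≤ _ := abs_mul_le_abs_mul_of_abs_le (abs_mul_mul_le_sqrt_mul_sqrt hs hXu hUv)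

theorem abs_zeroth_order_term_le (hp : 0 < p.2) :
    |u p * v p * hw β γ μ p| ≤ √(h1Density β γ μ u p) * √(h1Density β γ μ v p) :=
  abs_mul_mul_le_sqrt_mul_sqrt (hw_nonneg hp.le) (sq_mul_le_h1Density β γ μ u hp).2.2.2
    (sq_mul_le_h1Density β γ μ v hp).2.2.2

end Terms

theorem abs_setIntegral_le_mul_sqrt_h1Sq {β γ μ : ℝ} (hβ : 0 < β) (hγ : 0 ≤ γ) (hμ : 0 ≤ μ)
    {u v : ℝ × ℝ → ℝ} (hu : ContDiff ℝ 1 u) (hcu : HasCompactSupport u) (hv : ContDiff ℝ 1 v)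
    (hcv : HasCompactSupport v) {O : Set (ℝ × ℝ)} (hO : MeasurableSet O) (hOU : O ⊆ UHP)
    ⦃f : ℝ × ℝ → ℝ⦄ ⦃c : ℝ⦄ (hc : 0 ≤ c)
    (hf : ∀ p ∈ O, |f p| ≤ c * (√(h1Density β γ μ u p) * √(h1Density β γ μ v p))) :
    |∫ p in O, f p| ≤ c * √(h1Sq β γ μ O u) * √(h1Sq β γ μ O v) :=
  abs_integral_le_mul_sqrt_mul_sqrt hc (integrableOn_h1Density hβ hγ hμ hu hcu hO hOU)
    (integrableOn_h1Density hβ hγ hμ hv hcv hO hOU)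
    (ae_restrict_of_forall_mem hO fun _ hp ↦ h1Density_nonneg (hOU hp))
    (ae_restrict_of_forall_mem hO fun _ hp ↦ h1Density_nonneg (hOU hp))
    (ae_restrict_of_forall_mem hO hf)

theorem stmt2_general (σ ρ κ θ r q : ℝ) (hσ : σ ≠ 0) (hκ : 0 < κ) (hθ : 0 < θ)
    (hb₁ : r - q - κ * θ * ρ / σ = 0) :
    ∀ γ : ℝ, 0 < γ → ∃ C₅ : ℝ, 0 < C₅ ∧
      ∀ O : Set (ℝ × ℝ), IsOpen O → O ⊆ UHP →
        ∀ u v : ℝ × ℝ → ℝ, ContDiff ℝ (⊤ : ℕ∞) u → HasCompactSupport u →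
          ContDiff ℝ (⊤ : ℕ∞) v → HasCompactSupport v →
          |hestonForm σ ρ κ θ r q γ O u v|
            ≤ C₅ * Real.sqrt (h1Sq (2 * κ * θ / σ ^ 2) γ (2 * κ / σ ^ 2) O u)
                * Real.sqrt (h1Sq (2 * κ * θ / σ ^ 2) γ (2 * κ / σ ^ 2) O v) := by
  intro γ hγ
  refine ⟨(1 + 2 * |ρ * σ| + |σ ^ 2|) / 2 + γ / 2 * (1 + |ρ * σ|) + |κ * ρ / σ - 1 / 2| + |r|,
    by positivity, fun O hO hOU u v hu hcu hv hcv ↦ ?_⟩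
  have bound := abs_setIntegral_le_mul_sqrt_h1Sq (by positivity : 0 < 2 * κ * θ / σ ^ 2) hγ.le
    (by positivity : 0 ≤ 2 * κ / σ ^ 2)
    (hu.of_le (by simp)) hcu (hv.of_le (by simp)) hcv hO.measurableSet hOU
  have h₁ := bound (by positivity) fun p hp ↦ abs_gradient_term_le (hOU hp) (ρ * σ) (σ ^ 2)
  have h₂ := bound (by positivity) fun p hp ↦ abs_sign_term_le (hOU hp) (ρ * σ)
  have h₃ := bound (abs_nonneg _) fun p hp ↦ abs_drift_term_le (hOU hp) (κ * ρ / σ - 1 / 2)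
  have h₄ := bound zero_le_one fun p hp ↦
    (abs_zeroth_order_term_le (hOU hp)).trans_eq (one_mul _).symm
  rw [hestonForm, hb₁]
  simp only [add_zero, sub_eq_add_neg]
  refine (abs_add_four ..).trans ?_
  rw [abs_neg, abs_neg, abs_mul, abs_mul, abs_mul, abs_of_pos one_half_pos,
    abs_of_pos (half_pos hγ)]
  linear_combination 1 / 2 * h₁ + γ / 2 * h₂ + h₃ + |r| * h₄

/-- continuity estimate for the Heston bilinear form when b₁ = 0. -/
theorem stmt2 (σ ρ κ θ r q : ℝ) (hσ : σ ≠ 0) (hρ₁ : -1 < ρ) (hρ₂ : ρ < 1)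
    (hκ : 0 < κ) (hθ : 0 < θ) (hr : 0 ≤ r) (hq : 0 ≤ q)
    (hb₁ : r - q - κ * θ * ρ / σ = 0) :
    ∀ γ : ℝ, 0 < γ → ∃ C₅ : ℝ, 0 < C₅ ∧
      ∀ O : Set (ℝ × ℝ), IsOpen O → O ⊆ UHP →
        ∀ u v : ℝ × ℝ → ℝ, ContDiff ℝ (⊤ : ℕ∞) u → HasCompactSupport u →
          ContDiff ℝ (⊤ : ℕ∞) v → HasCompactSupport v →
          |hestonForm σ ρ κ θ r q γ O u v|
            ≤ C₅ * Real.sqrt (h1Sq (2 * κ * θ / σ ^ 2) γ (2 * κ / σ ^ 2) O u)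
                * Real.sqrt (h1Sq (2 * κ * θ / σ ^ 2) γ (2 * κ / σ ^ 2) O v) :=
  stmt2_general σ ρ κ θ r q hσ hκ hθ hb₁
end
end

section
/- There is a constant c > 0 such that for every N > 4 and every ε > 0 there exists ψ ∈ C^∞(ℝ) with 0 ≤ ψ ≤ 1, ψ(y) = 1 whenever |y| ≥ ε/2, ψ(y) = 0 whenever |y| ≤ ε/N, and such that for every β ≥ 1: if β > 1 then ∫_ℝ ψ'(y)² |y|^β dy ≤ c² 2^{2−β} (β−1)^{−1} (log N)^{−2} ε^{β−1}, and if β = 1 then ∫_ℝ ψ'(y)² |y| dy ≤ 2c² (log N)^{−1}. -/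
open MeasureTheory Real Filter

noncomputable section

/-!
Take `ψ y = φ (log (N |y| / ε) / log (N / 2))` with `φ` a smooth step from `0` on `(-∞, 0]` to `1`
on `[1, ∞)`. Then `|ψ' y| ≤ ‖φ'‖∞ / (log (N / 2) |y|)`, and `ψ'` vanishes off `ε / N ≤ |y| ≤ ε / 2`, so
`∫ ψ'² |y|^β ≤ 2 ‖φ'‖∞² / log (N / 2)² * ∫_{ε/N}^{ε/2} t^(β-2) dt`. The last integral is at most
`(ε / 2)^(β-1) / (β - 1)` for `β > 1` and equals `log (N / 2)` for `β = 1`; finally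
`log N ≤ 2 log (N / 2)` as `N ≥ 4`.
-/

open Set Topology

theorem integral_le_two_mul_integral_rpow_of_le_rpow_abs {f : ℝ → ℝ} {a b K r : ℝ}
    (ha : 0 < a) (hab : a ≤ b) (hf0 : ∀ y, 0 ≤ f y)
    (hf : ∀ y, a ≤ |y| → |y| ≤ b → f y ≤ K * |y| ^ r)
    (hf_out : ∀ y, |y| < a ∨ b < |y| → f y = 0) :
    ∫ y, f y ≤ 2 * K * ∫ t in a..b, t ^ r := by
  set g : ℝ → ℝ := (Icc a b).indicator fun t => K * t ^ r
  have hfg : ∀ y, f y ≤ g |y| := by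
    intro y
    by_cases hy : |y| ∈ Icc a b
    · simp only [g, indicator_of_mem hy]
      exact hf y hy.1 hy.2
    · simp only [g, indicator_of_notMem hy]
      rw [hf_out y]
      simpa only [mem_Icc, not_and_or, not_le] using hy
  have hg : Integrable fun y => g |y| := by
    have hcompact : IsCompact (abs ⁻¹' Icc a b : Set ℝ) :=
      (isCompact_Icc (a := -b) (b := b)).of_isClosed_subset
        (isClosed_Icc.preimage continuous_abs) fun y hy => abs_le.1 hy.2
    have hcont : ContinuousOn (fun y : ℝ => K * |y| ^ r) (abs ⁻¹' Icc a b) :=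
      continuousOn_const.mul <| continuous_abs.continuousOn.rpow_const fun y hy =>
        Or.inl (ha.trans_le hy.1).ne'
    have hg_eq : (fun y => g |y|) = (abs ⁻¹' Icc a b).indicator fun y => K * |y| ^ r :=
      funext fun y => (indicator_comp_right (g := fun t => K * t ^ r) abs).symm
    rw [hg_eq, integrable_indicator_iff hcompact.isClosed.measurableSet]
    exact hcont.integrableOn_compact hcompact
  calc ∫ y, f y ≤ ∫ y, g |y| := integral_mono_of_nonneg (.of_forall hf0) hg (.of_forall hfg)
    _ = 2 * ∫ t in Icc a b, K * t ^ r := by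
      rw [integral_comp_abs, setIntegral_indicator measurableSet_Icc,
        inter_eq_right.2 ((Icc_subset_Ioi_iff hab).2 ha)]
    _ = 2 * K * ∫ t in a..b, t ^ r := by
      rw [integral_Icc_eq_integral_Ioc, ← intervalIntegral.integral_of_le hab,
        intervalIntegral.integral_const_mul, mul_assoc]

theorem log_le_two_mul_log_div_two {N : ℝ} (hN : 4 ≤ N) : log N ≤ 2 * log (N / 2) := by
  have hsplit : log N = log (N / 2) + log 2 := by
    rw [← log_mul (by positivity) two_ne_zero, div_mul_cancel₀ N two_ne_zero]
  have h2 : log 2 ≤ log (N / 2) := log_le_log two_pos (by linarith)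
  linarith

theorem log_div_eq_log_abs_div {a : ℝ} (ha : 0 < a) (y : ℝ) : log (y / a) = log (|y| / a) := by
  rw [← log_abs, abs_div, abs_of_pos ha]

namespace Real.smoothTransition

theorem hasCompactSupport_deriv : HasCompactSupport (deriv smoothTransition) := by
  refine HasCompactSupport.intro (isCompact_Icc (a := 0) (b := 1)) fun x hx => ?_
  rcases not_and_or.1 hx with hx | hx
  · have hev : smoothTransition =ᶠ[𝓝 x] fun _ => 0 :=
      (eventually_lt_nhds (not_le.1 hx)).mono fun y hy => zero_of_nonpos hy.le
    rw [hev.deriv_eq, deriv_const]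
  · have hev : smoothTransition =ᶠ[𝓝 x] fun _ => 1 :=
      (eventually_gt_nhds (not_le.1 hx)).mono fun y hy => one_of_one_le hy.le
    rw [hev.deriv_eq, deriv_const]

theorem exists_abs_deriv_le : ∃ C, 0 < C ∧ ∀ x, |deriv smoothTransition x| ≤ C := by
  obtain ⟨C, hC⟩ := hasCompactSupport_deriv.exists_bound_of_continuous
    ((smoothTransition.contDiff (n := 1)).continuous_deriv le_rfl)
  exact ⟨max C 1, by positivity, fun x => (hC x).trans (le_max_left _ _)⟩

end Real.smoothTransition

/-- Rises from `0` at `|y| = a` to `1` at `|y| = b`; the argument is even in `y` because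
`Real.log` is (`log (y / a) = log (|y| / a)` for `a > 0`). -/
def logCutoff (a b y : ℝ) : ℝ := smoothTransition (log (y / a) / log (b / a))

section logCutoff

variable {a b : ℝ}

theorem logCutoff_eq_zero (ha : 0 < a) (hab : a ≤ b) {y : ℝ} (hy : |y| ≤ a) :
    logCutoff a b y = 0 := by
  refine smoothTransition.zero_of_nonpos (div_nonpos_of_nonpos_of_nonneg ?_ ?_)
  · rw [log_div_eq_log_abs_div ha]
    exact log_nonpos (by positivity) ((div_le_one ha).2 hy)
  · exact log_nonneg ((one_le_div ha).2 hab)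

theorem logCutoff_eq_one (ha : 0 < a) (hab : a < b) {y : ℝ} (hy : b ≤ |y|) :
    logCutoff a b y = 1 := by
  refine smoothTransition.one_of_one_le ?_
  rw [one_le_div (log_pos ((one_lt_div ha).2 hab)), log_div_eq_log_abs_div ha y]
  exact log_le_log (div_pos (ha.trans hab) ha) (div_le_div_of_nonneg_right hy ha.le)

theorem logCutoff_eventuallyEq_zero (ha : 0 < a) (hab : a ≤ b) {y : ℝ} (hy : |y| < a) :
    logCutoff a b =ᶠ[𝓝 y] fun _ => 0 :=
  (continuous_abs.continuousAt.eventually_lt continuousAt_const hy).mono fun _ hz =>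
    logCutoff_eq_zero ha hab hz.le

theorem logCutoff_eventuallyEq_one (ha : 0 < a) (hab : a < b) {y : ℝ} (hy : b < |y|) :
    logCutoff a b =ᶠ[𝓝 y] fun _ => 1 :=
  (continuousAt_const.eventually_lt continuous_abs.continuousAt hy).mono fun _ hz =>
    logCutoff_eq_one ha hab hz.le

theorem contDiff_logCutoff (ha : 0 < a) (hab : a ≤ b) {n : ℕ∞} :
    ContDiff ℝ n (logCutoff a b) := by
  refine contDiff_iff_contDiffAt.2 fun y => ?_
  rcases eq_or_ne y 0 with rfl | hy
  · exact contDiffAt_const.congr_of_eventuallyEq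
      (logCutoff_eventuallyEq_zero ha hab (by simpa using ha))
  · exact smoothTransition.contDiffAt.comp y
      (((contDiffAt_log.2 (div_ne_zero hy ha.ne')).comp y (contDiffAt_id.div_const a)).div_const _)

theorem hasDerivAt_logCutoff (ha : a ≠ 0) {y : ℝ} (hy : y ≠ 0) :
    HasDerivAt (logCutoff a b)
      (deriv smoothTransition (log (y / a) / log (b / a)) / (log (b / a) * y)) y := by
  have hu := (((hasDerivAt_id' y).div_const a).log (div_ne_zero hy ha)).div_const (log (b / a))
  refine (((smoothTransition.contDiff (n := 1)).differentiable one_ne_zero).differentiableAt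
    |>.hasDerivAt.comp y hu).congr_deriv ?_
  field_simp

theorem deriv_logCutoff_eq_zero (ha : 0 < a) (hab : a < b) {y : ℝ} (hy : |y| < a ∨ b < |y|) :
    deriv (logCutoff a b) y = 0 := by
  rcases hy with hy | hy
  · rw [(logCutoff_eventuallyEq_zero ha hab.le hy).deriv_eq, deriv_const]
  · rw [(logCutoff_eventuallyEq_one ha hab hy).deriv_eq, deriv_const]

variable {C : ℝ} (hC : ∀ x, |deriv smoothTransition x| ≤ C)
include hC

theorem sq_deriv_logCutoff_mul_rpow_le (ha : a ≠ 0) {y : ℝ} (hy : y ≠ 0) (β : ℝ) :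
    deriv (logCutoff a b) y ^ 2 * |y| ^ β ≤ C ^ 2 / log (b / a) ^ 2 * |y| ^ (β - 2) := by
  have hd : deriv smoothTransition (log (y / a) / log (b / a)) ^ 2 ≤ C ^ 2 :=
    sq_le_sq' (abs_le.1 (hC _)).1 (abs_le.1 (hC _)).2
  rw [(hasDerivAt_logCutoff ha hy).deriv, show β - 2 = β - (2 : ℕ) by norm_num,
    rpow_sub_natCast (abs_ne_zero.2 hy), div_pow, mul_pow, ← sq_abs y]
  calc _ = deriv smoothTransition (log (y / a) / log (b / a)) ^ 2 / log (b / a) ^ 2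
        * (|y| ^ β / |y| ^ 2) := by ring
    _ ≤ _ := by gcongr

theorem integral_sq_deriv_logCutoff_mul_rpow_le (ha : 0 < a) (hab : a < b) (β : ℝ) :
    ∫ y, deriv (logCutoff a b) y ^ 2 * |y| ^ β
      ≤ 2 * (C ^ 2 / log (b / a) ^ 2) * ∫ t in a..b, t ^ (β - 2) :=
  integral_le_two_mul_integral_rpow_of_le_rpow_abs ha hab.le (fun y => by positivity)
    (fun y hy _ => sq_deriv_logCutoff_mul_rpow_le hC ha.ne' (abs_pos.1 (ha.trans_le hy)) β)
    (fun y hy => by rw [deriv_logCutoff_eq_zero ha hab hy, zero_pow two_ne_zero, zero_mul])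

theorem integral_sq_deriv_logCutoff_mul_rpow_le_of_one_lt (ha : 0 < a) (hab : a < b) {β : ℝ}
    (hβ : 1 < β) :
    ∫ y, deriv (logCutoff a b) y ^ 2 * |y| ^ β
      ≤ 2 * (C ^ 2 / log (b / a) ^ 2) * (b ^ (β - 1) / (β - 1)) := by
  refine (integral_sq_deriv_logCutoff_mul_rpow_le hC ha hab β).trans
    (mul_le_mul_of_nonneg_left ?_ (by positivity))
  rw [integral_rpow (Or.inl (by linarith)), show β - 2 + 1 = β - 1 by ring]
  gcongr
  exact sub_le_self _ (rpow_nonneg ha.le _)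

theorem integral_sq_deriv_logCutoff_mul_abs_le (ha : 0 < a) (hab : a < b) :
    ∫ y, deriv (logCutoff a b) y ^ 2 * |y| ≤ 2 * C ^ 2 / log (b / a) := by
  have hL : 0 < log (b / a) := log_pos ((one_lt_div ha).2 hab)
  have hI : ∫ t in a..b, t ^ ((1 : ℝ) - 2) = log (b / a) := by
    rw [show (1 : ℝ) - 2 = -1 by norm_num]
    simp only [rpow_neg_one]
    exact integral_inv (notMem_uIcc_of_lt ha (ha.trans hab))
  have := integral_sq_deriv_logCutoff_mul_rpow_le hC ha hab 1
  simp only [rpow_one, hI] at this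
  refine this.trans_eq ?_
  field_simp

end logCutoff

/-- cutoff functions with integral norm decay. -/
theorem stmt9 :
    ∃ c : ℝ, 0 < c ∧
      ∀ N : ℝ, 4 < N → ∀ ε : ℝ, 0 < ε →
        ∃ ψ : ℝ → ℝ, ContDiff ℝ (⊤ : ℕ∞) ψ ∧
          (∀ y : ℝ, 0 ≤ ψ y ∧ ψ y ≤ 1) ∧
          (∀ y : ℝ, ε / 2 ≤ |y| → ψ y = 1) ∧
          (∀ y : ℝ, |y| ≤ ε / N → ψ y = 0) ∧
          ∀ β : ℝ, 1 ≤ β →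
            (1 < β →
              (∫ y : ℝ, (deriv ψ y) ^ 2 * |y| ^ β)
                ≤ c ^ 2 * (2 : ℝ) ^ (2 - β) * (β - 1)⁻¹ * ((Real.log N) ^ 2)⁻¹
                    * ε ^ (β - 1)) ∧
            (β = 1 →
              (∫ y : ℝ, (deriv ψ y) ^ 2 * |y|)
                ≤ 2 * c ^ 2 * (Real.log N)⁻¹) := by
  obtain ⟨C, hC0, hC⟩ := smoothTransition.exists_abs_deriv_le
  refine ⟨2 * C, by positivity, fun N hN ε hε => ?_⟩
  have ha : 0 < ε / N := by positivity
  have hab : ε / N < ε / 2 := div_lt_div_of_pos_left hε two_pos (by linarith)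
  have hL : log (ε / 2 / (ε / N)) = log (N / 2) := by
    congr 1
    field_simp
  have hlogN := log_le_two_mul_log_div_two hN.le
  have hlogN_pos : 0 < log N := log_pos (by linarith)
  refine ⟨logCutoff (ε / N) (ε / 2), contDiff_logCutoff ha hab.le,
    fun y => ⟨smoothTransition.nonneg _, smoothTransition.le_one _⟩,
    fun y => logCutoff_eq_one ha hab, fun y => logCutoff_eq_zero ha hab.le,
    fun β _ => ⟨fun hβ => ?_, fun hβ => ?_⟩⟩
  · refine (integral_sq_deriv_logCutoff_mul_rpow_le_of_one_lt hC ha hab hβ).trans ?_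
    have h2 : (2 : ℝ) ^ (2 - β) = 2 / 2 ^ (β - 1) := by
      rw [show 2 - β = 1 - (β - 1) by ring, rpow_sub two_pos, rpow_one]
    have hY : 0 ≤ C ^ 2 * ε ^ (β - 1) * (2 ^ (β - 1))⁻¹ * (β - 1)⁻¹ :=
      mul_nonneg (by positivity) (inv_nonneg.2 (by linarith))
    have hlog : 2 / log (N / 2) ^ 2 ≤ 8 / log N ^ 2 := by
      rw [div_le_div_iff₀ (by nlinarith) (by positivity)]
      nlinarith
    rw [hL, div_rpow hε.le zero_le_two, h2]
    calc _ = 2 / log (N / 2) ^ 2 * (C ^ 2 * ε ^ (β - 1) * (2 ^ (β - 1))⁻¹ * (β - 1)⁻¹) := by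
          ring
      _ ≤ 8 / log N ^ 2 * (C ^ 2 * ε ^ (β - 1) * (2 ^ (β - 1))⁻¹ * (β - 1)⁻¹) := by gcongr
      _ = _ := by ring
  · subst hβ
    refine (integral_sq_deriv_logCutoff_mul_abs_le hC ha hab).trans ?_
    rw [hL, ← div_eq_mul_inv, div_le_div_iff₀ (by nlinarith) hlogN_pos]
    nlinarith [mul_le_mul_of_nonneg_left hlogN (sq_nonneg C)]
end
end
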